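/- Fix λ ∈ ℂ and α, β ∈ ℝ, and let y = (y_k) solve a_k y_{k+1} + a_{k−1} y_{k−1} + b_k y_k = λ y_k for k ≥ 1 with y_0 = α, y_1 = β. For T ∈ ℕ define κ^T ∈ ℂ^T by κ^T_t = 𝒯_{T−t}(λ), t = 0,…,T−1. Then the unique control f^T ∈ ℂ^T satisfying W^T f^T = (conj(y_1),…,conj(y_T)) is the unique solution of the Krein equation C^T f^T = β·conj(κ^T) − α·(R^T)* conj(κ^T), where (R^T)* is the Hermitian adjoint of the response matrix R^T. -/

import Mathlib

open scoped BigOperators ComplexConjugate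
open Matrix

/-- Chebyshev polynomials of the second kind (paper normalization), over `ℂ`. -/
def chebC (x : ℂ) : ℕ → ℂ
  | 0 => 0
  | 1 => 1
  | t + 2 => x * chebC x (t + 1) - chebC x t

/-- Solution `u^f` of the semi-infinite dynamical system with real coefficients `a, b`
and complex control `f`. -/
def solSC (a b : ℕ → ℝ) (f : ℕ → ℂ) : ℕ → ℕ → ℂ
  | n, 0 => if n = 0 then f 0 else 0
  | n, 1 =>
      if n = 0 then f 1
      else (a n : ℂ) * solSC a b f (n + 1) 0 + (a (n - 1) : ℂ) * solSC a b f (n - 1) 0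
        + (b n : ℂ) * solSC a b f n 0
  | n, t + 2 =>
      if n = 0 then f (t + 2)
      else (a n : ℂ) * solSC a b f (n + 1) (t + 1) + (a (n - 1) : ℂ) * solSC a b f (n - 1) (t + 1)
        + (b n : ℂ) * solSC a b f n (t + 1) - solSC a b f n t
  termination_by n t => t

/-- Extension of a finite complex control by zero. -/
def ctrlC (T : ℕ) (f : Fin T → ℂ) : ℕ → ℂ := fun t => if h : t < T then f ⟨t, h⟩ else 0

/-- The control `δ = (1,0,0,…)`. -/
def dctrlC : ℕ → ℂ := fun t => if t = 0 then 1 else 0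

/-- The control operator `W^T : ℂ^T → ℂ^T`, `f ↦ (u^f_{1,T},…,u^f_{T,T})`. -/
def WFunC (a b : ℕ → ℝ) (T : ℕ) (f : Fin T → ℂ) : Fin T → ℂ :=
  fun n => solSC a b (ctrlC T f) ((n : ℕ) + 1) T

/-- The control operator `W^T` as a matrix. -/
def WMatC (a b : ℕ → ℝ) (T : ℕ) : Matrix (Fin T) (Fin T) ℂ :=
  Matrix.of fun n j => WFunC a b T (fun k => if k = j then 1 else 0) n

/-- Connecting operator `C^T = (W^T)* W^T`. -/
noncomputable def CMatC (a b : ℕ → ℝ) (T : ℕ) : Matrix (Fin T) (Fin T) ℂ :=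
  (WMatC a b T)ᴴ * WMatC a b T

/-- The response vector: `respC a b t = u^δ_{1,t+1} = r_t`. -/
def respC (a b : ℕ → ℝ) : ℕ → ℂ := fun t => solSC a b dctrlC 1 (t + 1)

/-- The response matrix `R^T`: lower-triangular Toeplitz, `(R^T f)_t = Σ_{s=0}^{t-1} r_{t-1-s} f_s`. -/
def RMatC (a b : ℕ → ℝ) (T : ℕ) : Matrix (Fin T) (Fin T) ℂ :=
  Matrix.of fun t s => if (s : ℕ) < (t : ℕ) then respC a b ((t : ℕ) - (s : ℕ) - 1) else 0

/-!
Superposition in time writes `u^f_{n,T} = Σ_s f_s u^δ_{n,T-s}`, so `W^T` has entries `u^δ_{n+1,T-j}`;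
by finite speed of propagation it is triangular after reversing its columns, with diagonal
`u^δ_{n,n} = a_0 ⋯ a_{n-1} ≠ 0`. Hence `W^T` is invertible and the Krein equation is
`(W^T)^*` applied to `W^T f = ȳ`, so everything reduces to computing `(W^T)^* ȳ`, i.e. the sums
`S_m = Σ_n u^δ_{n,m} y_n` at `m = T - t`. Green's formula for the Jacobi operator, applied to
`u^δ_{·,m+1}` and `y`, gives `S_{m+2} = λ S_{m+1} - S_m - α u^δ_{1,m+1}`, and since `𝒯` is the fundamental
solution of this recurrence, `S_m = β 𝒯_m - α Σ_k 𝒯_{m-k} u^δ_{1,k}`.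
-/

open Finset

def jacobiOp (a b : ℕ → ℝ) (u : ℕ → ℂ) (n : ℕ) : ℂ :=
  (a n : ℂ) * u (n + 1) + (a (n - 1) : ℂ) * u (n - 1) + (b n : ℂ) * u n

theorem jacobiOp_sum_mul (a b : ℕ → ℝ) {ι : Type*} (s : Finset ι) (c : ι → ℂ) (u : ι → ℕ → ℂ)
    (n : ℕ) :
    jacobiOp a b (fun m => ∑ i ∈ s, c i * u i m) n = ∑ i ∈ s, c i * jacobiOp a b (u i) n := by
  simp only [jacobiOp, mul_sum, ← sum_add_distrib]
  exact sum_congr rfl fun i _ => by ring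

theorem jacobiOp_green (a b : ℕ → ℝ) (u v : ℕ → ℂ) (N : ℕ) :
    ∑ k ∈ range N, (jacobiOp a b u (k + 1) * v (k + 1) - u (k + 1) * jacobiOp a b v (k + 1))
      = (a N : ℂ) * (u (N + 1) * v N - u N * v (N + 1))
        - (a 0 : ℂ) * (u 1 * v 0 - u 0 * v 1) := by
  induction N with
  | zero => simp
  | succ N ih =>
    rw [sum_range_succ, ih]
    simp only [jacobiOp, Nat.add_sub_cancel]
    ring

theorem sum_chebC_mul_eq_of_recurrence (x : ℂ) {S g : ℕ → ℂ} (h0 : S 0 = 0) (h1 : S 1 = g 0)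
    (hS : ∀ m, S (m + 2) = x * S (m + 1) - S m + g (m + 1)) (m : ℕ) :
    S m = ∑ k ∈ range m, chebC x (m - k) * g k := by
  induction m using Nat.strong_induction_on with
  | _ m ih =>
    match m with
    | 0 => simp [h0]
    | 1 => simp [h1, chebC]
    | m + 2 =>
      have hcheb : ∀ k ∈ range (m + 1),
          chebC x (m + 2 - k) * g k = x * (chebC x (m + 1 - k) * g k) - chebC x (m - k) * g k := by
        intro k hk
        rw [mem_range] at hk
        rw [show m + 2 - k = (m - k) + 2 by omega, show m + 1 - k = (m - k) + 1 by omega, chebC]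
        ring
      rw [hS, ih (m + 1) (by omega), ih m (by omega), sum_range_succ _ (m + 1),
        sum_congr rfl hcheb, sum_sub_distrib, ← mul_sum,
        sum_range_succ (fun k => chebC x (m - k) * g k)]
      simp [chebC]

section Solution

variable (a b : ℕ → ℝ) (f : ℕ → ℂ)

theorem solSC_zero_left (t : ℕ) : solSC a b f 0 t = f t := by
  match t with
  | 0 | 1 | _ + 2 => simp [solSC]

theorem solSC_zero_right {n : ℕ} (hn : n ≠ 0) : solSC a b f n 0 = 0 := by
  simp [solSC, hn]

-- `t - 1` is truncated: at `t = 0` the last term is `u_{n,0} = 0`, which plays the role of `u_{n,-1}`.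
theorem solSC_succ {n : ℕ} (hn : n ≠ 0) (t : ℕ) :
    solSC a b f n (t + 1) = jacobiOp a b (fun m => solSC a b f m t) n - solSC a b f n (t - 1) := by
  match t with
  | 0 => rw [Nat.zero_sub, solSC_zero_right a b f hn, sub_zero, zero_add, solSC, if_neg hn, jacobiOp]
  | t + 1 => rw [solSC, if_neg hn, jacobiOp, Nat.add_sub_cancel]

theorem solSC_eq_zero_of_lt {n t : ℕ} (h : t < n) : solSC a b f n t = 0 := by
  induction t using Nat.strong_induction_on generalizing n with
  | _ t ih =>
    match t with
    | 0 => exact solSC_zero_right a b f (by omega)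
    | t + 1 =>
      rw [solSC_succ a b f (by omega), jacobiOp, ih t (by omega) (by omega),
        ih t (by omega) (by omega), ih t (by omega) (by omega), ih (t - 1) (by omega) (by omega)]
      ring

theorem solSC_eq_sum_antidiagonal (n t : ℕ) :
    solSC a b f n t = ∑ p ∈ antidiagonal t, f p.1 * solSC a b dctrlC n p.2 := by
  induction t using Nat.strong_induction_on generalizing n with
  | _ t ih =>
    rcases eq_or_ne n 0 with rfl | hn
    · rw [solSC_zero_left, sum_eq_single (t, 0)]
      · simp [solSC_zero_left, dctrlC]
      · intro p hp hpt
        rw [HasAntidiagonal.mem_antidiagonal] at hp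
        have hp2 : p.2 ≠ 0 := fun h => hpt (Prod.ext (by omega) h)
        rw [solSC_zero_left, dctrlC, if_neg hp2, mul_zero]
      · simp
    match t with
    | 0 => simp [solSC_zero_right a b _ hn]
    | t + 1 =>
      have hshift : ∑ p ∈ antidiagonal t, f p.1 * solSC a b dctrlC n (p.2 - 1)
          = ∑ p ∈ antidiagonal (t - 1), f p.1 * solSC a b dctrlC n p.2 := by
        match t with
        | 0 => simp [solSC_zero_right a b _ hn]
        | t + 1 => simp [Nat.sum_antidiagonal_succ', solSC_zero_right a b _ hn]
      simp only [solSC_succ a b _ hn, Nat.sum_antidiagonal_succ', solSC_zero_right a b _ hn,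
        mul_zero, zero_add, mul_sub, sum_sub_distrib, hshift, ← jacobiOp_sum_mul]
      rw [← ih (t - 1) (by omega)]
      congr 2
      funext m
      exact ih t (by omega) m

theorem solSC_dctrlC_diag (n : ℕ) : solSC a b dctrlC n n = ∏ k ∈ range n, (a k : ℂ) := by
  induction n with
  | zero => simp [solSC_zero_left, dctrlC]
  | succ n ih =>
    rw [solSC_succ a b _ (by omega : n + 1 ≠ 0), jacobiOp, Nat.add_sub_cancel, ih,
      solSC_eq_zero_of_lt a b _ (show n < n + 1 + 1 by omega),
      solSC_eq_zero_of_lt a b _ (show n < n + 1 by omega),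
      solSC_eq_zero_of_lt a b _ (show n - 1 < n + 1 by omega), prod_range_succ]
    ring

end Solution

section Matrices

variable (a b : ℕ → ℝ) {T : ℕ}

theorem WFunC_apply (g : Fin T → ℂ) (n : Fin T) :
    WFunC a b T g n = ∑ j : Fin T, g j * solSC a b dctrlC (n + 1) (T - j) := by
  have hT : ctrlC T g T = 0 := by simp [ctrlC]
  rw [WFunC, solSC_eq_sum_antidiagonal,
    Nat.sum_antidiagonal_eq_sum_range_succ (fun i j => ctrlC T g i * solSC a b dctrlC _ j),
    sum_range_succ, hT, zero_mul, add_zero,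
    ← Fin.sum_univ_eq_sum_range (fun i => ctrlC T g i * solSC a b dctrlC _ (T - i))]
  simp [ctrlC]

theorem WMatC_apply (n j : Fin T) : WMatC a b T n j = solSC a b dctrlC (n + 1) (T - j) := by
  simp [WMatC, WFunC_apply]

theorem WFunC_eq_mulVec (g : Fin T → ℂ) : WFunC a b T g = WMatC a b T *ᵥ g := by
  funext n
  simp only [WFunC_apply, mulVec, dotProduct, WMatC_apply, mul_comm]

theorem RMatC_apply (u t : Fin T) : RMatC a b T u t = solSC a b dctrlC 1 (u - t) := by
  rw [RMatC, of_apply]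
  split_ifs with h
  · rw [respC]
    congr 1
    omega
  · rw [Nat.sub_eq_zero_of_le (by omega), solSC_zero_right a b _ one_ne_zero]

theorem isUnit_WMatC (hapos : ∀ n, 0 < a n) : IsUnit (WMatC a b T) := by
  set M := (WMatC a b T).submatrix id Fin.revPerm
  have hM : ∀ i j, M i j = solSC a b dctrlC (i + 1) (j + 1) := by
    intro i j
    simp only [M, submatrix_apply, id, WMatC_apply, Fin.revPerm_apply, Fin.val_rev]
    congr 1
    omega
  have hupper : M.IsUpperTriangular := fun i j (hji : j < i) => by
    rw [hM, solSC_eq_zero_of_lt a b _ (by simpa using hji)]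
  have hW : WMatC a b T = M.submatrix id Fin.revPerm := by
    ext i j
    simp [M]
  rw [isUnit_iff_isUnit_det, isUnit_iff_ne_zero, hW, det_permute', det_of_isUpperTriangular hupper]
  refine mul_ne_zero (Int.cast_ne_zero.mpr (Units.ne_zero _)) (prod_ne_zero_iff.mpr fun i _ => ?_)
  rw [hM, solSC_dctrlC_diag]
  exact prod_ne_zero_iff.mpr fun k _ => Complex.ofReal_ne_zero.mpr (hapos k).ne'

end Matrices

section Krein

variable {a b : ℕ → ℝ}

theorem sum_range_mul_solSC_dctrlC_of_le (v : ℕ → ℂ) {m N : ℕ} (h : m ≤ N) :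
    ∑ k ∈ range N, v (k + 1) * solSC a b dctrlC (k + 1) m
      = ∑ k ∈ range m, v (k + 1) * solSC a b dctrlC (k + 1) m := by
  obtain ⟨d, rfl⟩ := Nat.exists_eq_add_of_le h
  rw [sum_range_add, add_eq_left]
  exact sum_eq_zero fun k _ => by rw [solSC_eq_zero_of_lt a b _ (by omega), mul_zero]

theorem sum_mul_solSC_dctrlC_add_two (ha0 : a 0 = 1) (lam : ℂ) (alpha : ℝ) (y : ℕ → ℂ)
    (hy0 : y 0 = (alpha : ℂ)) (hy : ∀ k, 1 ≤ k → jacobiOp a b y k = lam * y k) (m : ℕ) :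
    ∑ k ∈ range (m + 2), y (k + 1) * solSC a b dctrlC (k + 1) (m + 2)
      = lam * ∑ k ∈ range (m + 1), y (k + 1) * solSC a b dctrlC (k + 1) (m + 1)
        - ∑ k ∈ range m, y (k + 1) * solSC a b dctrlC (k + 1) m
        - alpha * solSC a b dctrlC 1 (m + 1) := by
  set u : ℕ → ℂ := fun n => solSC a b dctrlC n (m + 1)
  have hsummand : ∀ k ∈ range (m + 2),
      jacobiOp a b u (k + 1) * y (k + 1) - u (k + 1) * jacobiOp a b y (k + 1)
        = y (k + 1) * solSC a b dctrlC (k + 1) (m + 2) + y (k + 1) * solSC a b dctrlC (k + 1) m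
          - lam * (y (k + 1) * solSC a b dctrlC (k + 1) (m + 1)) := by
    intro k _
    have hu := solSC_succ a b dctrlC (n := k + 1) (by omega) (m + 1)
    rw [Nat.add_sub_cancel] at hu
    rw [hy (k + 1) (by omega)]
    linear_combination -y (k + 1) * hu
  have green := jacobiOp_green a b u y (m + 2)
  rw [sum_congr rfl hsummand, sum_sub_distrib, sum_add_distrib, ← mul_sum,
    sum_range_mul_solSC_dctrlC_of_le y (by omega : m ≤ m + 2),
    sum_range_mul_solSC_dctrlC_of_le y (by omega : m + 1 ≤ m + 2)] at green
  simp only [u, solSC_eq_zero_of_lt a b dctrlC (show m + 1 < m + 3 by omega),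
    solSC_eq_zero_of_lt a b dctrlC (show m + 1 < m + 2 by omega), solSC_zero_left, dctrlC,
    Nat.add_one_ne_zero, if_false, ha0, hy0, Complex.ofReal_one] at green
  linear_combination green

theorem sum_mul_solSC_dctrlC_eq (ha0 : a 0 = 1) (lam : ℂ) (alpha beta : ℝ) (y : ℕ → ℂ)
    (hy0 : y 0 = (alpha : ℂ)) (hy1 : y 1 = (beta : ℂ))
    (hy : ∀ k, 1 ≤ k → jacobiOp a b y k = lam * y k) (m : ℕ) :
    ∑ k ∈ range m, y (k + 1) * solSC a b dctrlC (k + 1) m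
      = beta * chebC lam m - alpha * ∑ k ∈ range m, chebC lam (m - k) * solSC a b dctrlC 1 k := by
  have hS := sum_chebC_mul_eq_of_recurrence lam
    (S := fun m => ∑ k ∈ range m, y (k + 1) * solSC a b dctrlC (k + 1) m)
    (g := fun k => beta * dctrlC k - alpha * solSC a b dctrlC 1 k) (by simp)
    (by simp [solSC_dctrlC_diag, ha0, hy1, dctrlC, solSC_zero_right])
    (fun m => by
      simp only [dctrlC, Nat.add_one_ne_zero, if_false, mul_zero, zero_sub, ← sub_eq_add_neg]
      exact sum_mul_solSC_dctrlC_add_two ha0 lam alpha y hy0 hy m) m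
  rw [hS]
  rcases Nat.eq_zero_or_pos m with rfl | hm
  · simp [chebC]
  · simp [mul_sub, sum_sub_distrib, mul_sum, dctrlC, hm, mul_comm, mul_left_comm]

theorem vecMul_RMatC_apply (v : ℕ → ℂ) {T : ℕ} (t : Fin T) :
    ((fun u : Fin T => v (T - u)) ᵥ* RMatC a b T) t
      = ∑ k ∈ range (T - t), v (T - t - k) * solSC a b dctrlC 1 k := by
  have hsplit := sum_range_add (fun u => v (T - u) * solSC a b dctrlC 1 (u - t)) t (T - t)
  rw [Nat.add_sub_cancel' t.isLt.le] at hsplit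
  simp only [vecMul, dotProduct, RMatC_apply]
  rw [Fin.sum_univ_eq_sum_range (fun u => v (T - u) * solSC a b dctrlC 1 (u - t)), hsplit,
    sum_eq_zero fun u hu => ?_, zero_add]
  · exact sum_congr rfl fun k _ => by congr 2 <;> omega
  · rw [Nat.sub_eq_zero_of_le (mem_range.mp hu).le, solSC_zero_right a b _ one_ne_zero, mul_zero]

theorem vecMul_WMatC (ha0 : a 0 = 1) (lam : ℂ) (alpha beta : ℝ) (y : ℕ → ℂ)
    (hy0 : y 0 = (alpha : ℂ)) (hy1 : y 1 = (beta : ℂ))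
    (hy : ∀ k, 1 ≤ k → jacobiOp a b y k = lam * y k) (T : ℕ) :
    (fun n : Fin T => y (n + 1)) ᵥ* WMatC a b T
      = fun t : Fin T => beta * chebC lam (T - t)
          - alpha * ((fun u : Fin T => chebC lam (T - u)) ᵥ* RMatC a b T) t := by
  funext t
  rw [vecMul_RMatC_apply, ← sum_mul_solSC_dctrlC_eq ha0 lam alpha beta y hy0 hy1 hy,
    ← sum_range_mul_solSC_dctrlC_of_le y (Nat.sub_le T t)]
  simp only [vecMul, dotProduct, WMatC_apply]
  exact Fin.sum_univ_eq_sum_range (fun n => y (n + 1) * solSC a b dctrlC (n + 1) (T - t)) T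

end Krein

/-- Krein equations: the unique control `f^T` with
`W^T f^T = (conj y_1,…,conj y_T)` is the unique solution of
`C^T f^T = β conj(κ^T) − α (R^T)* conj(κ^T)`, where `κ^T_t = 𝒯_{T-t}(λ)`. -/
theorem krein_equation
    (a b : ℕ → ℝ) (ha0 : a 0 = 1) (hapos : ∀ n, 0 < a n)
    (lam : ℂ) (alpha beta : ℝ) (y : ℕ → ℂ)
    (hy0 : y 0 = (alpha : ℂ)) (hy1 : y 1 = (beta : ℂ))
    (hy : ∀ k : ℕ, 1 ≤ k →
      (a k : ℂ) * y (k + 1) + (a (k - 1) : ℂ) * y (k - 1) + (b k : ℂ) * y k = lam * y k)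
    (T : ℕ) :
    (∃! g : Fin T → ℂ, WFunC a b T g = fun n : Fin T => conj (y ((n : ℕ) + 1))) ∧
    (∀ g : Fin T → ℂ,
      (WFunC a b T g = fun n : Fin T => conj (y ((n : ℕ) + 1))) ↔
        (CMatC a b T).mulVec g
          = fun t : Fin T =>
              (beta : ℂ) * conj (chebC lam (T - (t : ℕ)))
                - (alpha : ℂ) *
                  ((RMatC a b T)ᴴ.mulVec (fun u : Fin T => conj (chebC lam (T - (u : ℕ))))) t) := by
  have hW : IsUnit (WMatC a b T) := isUnit_WMatC a b hapos
  have hrhs : (WMatC a b T)ᴴ *ᵥ (fun n : Fin T => conj (y (n + 1)))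
      = fun t : Fin T => beta * conj (chebC lam (T - t))
          - alpha * ((RMatC a b T)ᴴ *ᵥ fun u : Fin T => conj (chebC lam (T - u))) t := by
    rw [mulVec_conjTranspose, mulVec_conjTranspose]
    funext t
    simp only [Pi.star_def, Complex.star_def, Complex.conj_conj,
      vecMul_WMatC ha0 lam alpha beta y hy0 hy1 hy]
    simp
  simp only [WFunC_eq_mulVec]
  have hbij : Function.Bijective (WMatC a b T).mulVec :=
    ⟨mulVec_injective_iff_isUnit.mpr hW, mulVec_surjective_iff_isUnit.mpr hW⟩
  refine ⟨hbij.existsUnique _, fun g => ?_⟩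
  rw [CMatC, ← mulVec_mulVec, ← hrhs]
  exact ((mulVec_injective_iff_isUnit.mpr ((isUnit_conjTranspose _).mpr hW)).eq_iff).symm
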